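/- arXiv:1302.0769 — 5 statements merged into one kernel-verified Lean document; each statement's English description precedes it below -/
import Mathlib

section
/- Let K be a field, M ⊆ ℤ^m an affine monoid, and let x, y ∈ M be noninvertible elements with x ≠ y. Then the ideal of K[M] generated by the binomial X^x − X^y is a prime ideal if and only if both of the following hold: (a) X^x, X^y is a K[M]-sequence; (b) the quotient group gp(M)/ℤ(x−y) is torsionfree, i.e., for every z ∈ gp(M) and every integer n > 0 such that n·z is an integer multiple of x − y, z itself is an integer multiple of x − y. -/
/-!
Let `Q = gp(M)/ℤ(x - y)` and `φ : M → Q` the projection. The ideal `I = (X^x - X^y)` lies in the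
kernel of `K[M] → K[Q]`, and this kernel is spanned by the binomials `X^a - X^b` with
`a - b ∈ ℤ(x - y)`; multiplying such a binomial by a power of `X^x` or of `X^y` moves it into `I`.
Hence when `X^x` and `X^y` are non-zerodivisors modulo `I`, which is what the regular sequence
condition amounts to, `I` is the kernel, and it is prime as soon as `Q` is torsionfree
(then `K[Q]` is a domain).

Conversely, let `I` be prime. Since `X^x, X^y ∉ I`, they are non-zerodivisors modulo `I`, so
again `X^a - X^b ∈ I` whenever `φ a = φ b`. If `z = u - v` has finite order `k` in `Q`, this gives
`(X^u)^k - (X^v)^k ∈ I`, so `I` contains `X^u - X^v` or the geometric sum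
`∑_{i<k} (X^u)^i (X^v)^(k-1-i)`. The `k` monomials of that sum have distinct images in `K[Q]`,
so the sum is not in `I`, and therefore `φ u = φ v`.
-/

open AddMonoidAlgebra

/-- A sequence `fs = [f₁, …, fᵣ]` of elements of a commutative ring `R` is an `R`-sequence
(regular sequence): `(f₁, …, fᵣ) ≠ R` and each `fᵢ` is a non-zerodivisor modulo
`(f₁, …, f_{i−1})`. -/
def IsRegSeq {R : Type*} [CommRing R] (fs : List R) : Prop :=
  Ideal.span {f | f ∈ fs} ≠ ⊤ ∧
  ∀ i : Fin fs.length, ∀ r : R,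
    fs.get i * r ∈ Ideal.span {f | f ∈ fs.take i.val} →
      r ∈ Ideal.span {f | f ∈ fs.take i.val}

section RegularPair

variable {R : Type*} [CommRing R] {a b : R}

open Ideal

theorem isRegSeq_pair_iff :
    IsRegSeq [a, b] ↔ span {a, b} ≠ ⊤ ∧ (∀ r, a * r = 0 → r = 0) ∧
      ∀ r, b * r ∈ span {a} → r ∈ span {a} := by
  simp [IsRegSeq, Fin.forall_fin_two, Set.insert_def]

theorem mem_of_pow_mul_mem {I : Ideal R} {s : R} (hs : ∀ r, s * r ∈ I → r ∈ I) (p : ℕ) {r : R}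
    (h : s ^ p * r ∈ I) : r ∈ I := by
  induction p generalizing r with
  | zero => simpa using h
  | succ p ih => exact hs _ (ih (by rwa [pow_succ, mul_assoc] at h))

theorem mem_span_sub_of_mul_mem_left (ha : ∀ r, a * r = 0 → r = 0)
    (hb : ∀ r, b * r ∈ span {a} → r ∈ span {a}) {r : R} (h : a * r ∈ span {a - b}) :
    r ∈ span {a - b} := by
  obtain ⟨s, hs⟩ := mem_span_singleton'.1 h
  have hbs : b * s ∈ span {a} := mem_span_singleton'.2 ⟨s - r, by linear_combination hs⟩
  obtain ⟨c, hc⟩ := mem_span_singleton'.1 (hb s hbs)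
  have : a * (r - c * (a - b)) = 0 := by linear_combination -hs - (a - b) * hc
  rw [sub_eq_zero.1 (ha _ this)]
  exact mul_mem_left _ _ (mem_span_singleton_self _)

theorem mem_span_sub_of_mul_mem_right (ha : ∀ r, a * r = 0 → r = 0)
    (hb : ∀ r, b * r ∈ span {a} → r ∈ span {a}) {r : R} (h : b * r ∈ span {a - b}) :
    r ∈ span {a - b} := by
  refine mem_span_sub_of_mul_mem_left ha hb ?_
  rw [show a * r = (a - b) * r + b * r by ring]
  exact add_mem (mul_mem_right _ _ (mem_span_singleton_self _)) h

theorem mem_span_of_mul_mem_of_isPrime [IsDomain R] (hP : (span {a - b}).IsPrime)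
    (ha : a ∉ span {a - b}) (hab : a ≠ b) {r : R} (h : b * r ∈ span {a}) : r ∈ span {a} := by
  obtain ⟨s, hs⟩ := mem_span_singleton'.1 h
  have : a * (r - s) ∈ span {a - b} := mem_span_singleton'.2 ⟨r, by linear_combination hs⟩
  obtain ⟨t, ht⟩ := mem_span_singleton'.1 ((hP.mem_or_mem this).resolve_left ha)
  have : (a - b) * (r - t * a) = 0 := by linear_combination hs - a * ht
  exact mem_span_singleton'.2
    ⟨t, (sub_eq_zero.1 ((mul_eq_zero.1 this).resolve_left (sub_ne_zero.2 hab))).symm⟩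

theorem isRegSeq_pair_of_isPrime [IsDomain R] (hspan : span {a, b} ≠ ⊤) (hab : a ≠ b)
    (hP : (span {a - b}).IsPrime) (ha : a ∉ span {a - b}) : IsRegSeq [a, b] := by
  have ha0 : a ≠ 0 := by rintro rfl; exact ha (zero_mem _)
  exact isRegSeq_pair_iff.2 ⟨hspan, fun r h => (mul_eq_zero.1 h).resolve_left ha0,
    fun r => mem_span_of_mul_mem_of_isPrime hP ha hab⟩

end RegularPair

section MonoidAlgebra

variable {K M : Type*} [CommRing K] [AddCommMonoid M]

theorem span_single_pair_ne_top [Nontrivial K] {x y : M} (hx : ¬IsAddUnit x)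
    (hy : ¬IsAddUnit y) : Ideal.span {(single x 1 : K[M]), single y 1} ≠ ⊤ := by
  have hcoeff {w : M} (hw : ¬IsAddUnit w) (r : K[M]) : (r * single w 1).coeff 0 = 0 :=
    coeff_mul_single_of_forall_add_ne _ _ fun d hd => hw (isAddUnit_iff_exists_neg'.2 ⟨d, hd⟩)
  rw [Ne, Ideal.eq_top_iff_one, Ideal.mem_span_pair]
  rintro ⟨r, s, h⟩
  simpa [hcoeff hx, hcoeff hy] using congrArg (fun f : K[M] => f.coeff 0) h

theorem single_pow_mul_sub_single_mem {I : Ideal K[M]} {x y a b : M}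
    (hI : single x 1 - single y 1 ∈ I) {p : ℕ} (h : a + p • y = b + p • x) :
    single y 1 ^ p * (single a 1 - single b 1 : K[M]) ∈ I := by
  have : single y 1 ^ p * (single a 1 - single b 1 : K[M]) =
      single b 1 * (single x 1 ^ p - single y 1 ^ p) := by
    simp only [single_pow, one_pow, mul_sub, single_mul_single, one_mul, add_comm (p • y), h]
  rw [this]
  exact I.mul_mem_left _ (I.mem_of_dvd (sub_dvd_pow_sub_pow _ _ p) hI)

theorem span_single_sub_single_le_ker {N : Type*} [AddCommMonoid N] (φ : M →+ N) {x y : M}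
    (h : φ x = φ y) :
    Ideal.span {(single x 1 : K[M]) - single y 1} ≤ RingHom.ker (mapDomainRingHom K φ) := by
  rw [Ideal.span_le, Set.singleton_subset_iff, SetLike.mem_coe, RingHom.mem_ker, map_sub]
  simp [h]

theorem single_notMem_span_single_sub_single [Nontrivial K] (a x y : M) :
    (single a 1 : K[M]) ∉ Ideal.span {single x 1 - single y 1} := fun h => by
  have := span_single_sub_single_le_ker (K := K) (0 : M →+ Unit) (Subsingleton.elim _ _) h
  rw [RingHom.mem_ker, mapDomainRingHom_apply, mapDomain_single, single_eq_zero] at this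
  exact one_ne_zero this

theorem ker_mapDomainRingHom_le {N : Type*} [AddCommMonoid N] (φ : M →+ N) {I : Ideal K[M]}
    (hI : ∀ a b, φ a = φ b → single a 1 - single b 1 ∈ I) :
    RingHom.ker (mapDomainRingHom K φ) ≤ I := by
  let s : N → M := Function.invFun φ
  have hsub (g : K[M]) : g - mapDomain s (mapDomain φ g) ∈ I := by
    induction g using AddMonoidAlgebra.induction_linear with
    | zero => simp
    | add f g hf hg => simpa [mapDomain_add, add_sub_add_comm] using I.add_mem hf hg
    | single a r =>
      have : single a r - single (s (φ a)) r = single 0 r * (single a 1 - single (s (φ a)) 1) := by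
        simp [mul_sub, single_mul_single]
      rw [mapDomain_single, mapDomain_single, this]
      exact I.mul_mem_left _ (hI _ _ (Function.invFun_eq ⟨a, rfl⟩).symm)
  intro g hg
  have hg0 : mapDomain φ g = 0 := hg
  simpa [hg0, mapDomain_zero] using hsub g

theorem sum_single_nsmul_add_nsmul_ne_zero [Nontrivial K] {Q : Type*} [AddCommGroup Q] (u v : Q)
    {k : ℕ} (hk : 0 < k) (hkuv : ∀ i < k, i • (u - v) = 0 → i = 0) :
    ∑ i ∈ Finset.range k, (single (i • u + (k - 1 - i) • v) 1 : K[Q]) ≠ 0 := by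
  classical
  intro h
  have hcoeff := congrArg (fun f : K[Q] => f.coeff ((k - 1) • v)) h
  simp only [coeff_sum, Finsupp.finsetSum_apply, coeff_single, Finsupp.single_apply, coeff_zero,
    Finsupp.coe_zero, Pi.zero_apply] at hcoeff
  rw [Finset.sum_eq_single 0] at hcoeff
  · simp at hcoeff
  · intro i hi hi0
    rw [if_neg]
    intro heq
    refine hi0 (hkuv i (Finset.mem_range.1 hi) ?_)
    have : (k - 1) • v = i • v + (k - 1 - i) • v := by
      rw [← add_nsmul]; congr 1; have := Finset.mem_range.1 hi; omega
    rw [this, add_left_inj] at heq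
    rw [nsmul_sub, heq, sub_self]
  · simp [hk]

end MonoidAlgebra

section GpQuot

variable {G : Type*} [AddCommGroup G] (M : AddSubmonoid G) (x y : M)

/-- The group `gp(M)/ℤ(x - y)`. -/
abbrev GpQuot : Type _ :=
  Submodule.span ℤ (M : Set G) ⧸
    (ℤ ∙ ((x : G) - y)).comap (Submodule.span ℤ (M : Set G)).subtype

def toGpQuot : M →+ GpQuot M x y where
  toFun a := Submodule.Quotient.mk ⟨a, Submodule.subset_span a.2⟩
  map_zero' := rfl
  map_add' _ _ := rfl

variable {M x y}

theorem toGpQuot_eq_iff {a b : M} :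
    toGpQuot M x y a = toGpQuot M x y b ↔ ∃ d : ℤ, (a : G) - b = d • ((x : G) - y) := by
  change Submodule.Quotient.mk _ = Submodule.Quotient.mk _ ↔ _
  simp [Submodule.Quotient.eq, Submodule.mem_span_singleton, eq_comm]

theorem exists_sub_eq_of_mem_span {z : G} (hz : z ∈ Submodule.span ℤ (M : Set G)) :
    ∃ u ∈ M, ∃ v ∈ M, u - v = z := by
  induction hz using Submodule.span_induction with
  | mem z hz => exact ⟨z, hz, 0, M.zero_mem, sub_zero z⟩
  | zero => exact ⟨0, M.zero_mem, 0, M.zero_mem, sub_zero 0⟩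
  | add _ _ _ _ h₁ h₂ =>
    obtain ⟨u, hu, v, hv, rfl⟩ := h₁
    obtain ⟨u', hu', v', hv', rfl⟩ := h₂
    exact ⟨u + u', M.add_mem hu hu', v + v', M.add_mem hv hv', by abel⟩
  | smul c _ _ h =>
    obtain ⟨u, hu, v, hv, rfl⟩ := h
    obtain ⟨n, rfl | rfl⟩ := Int.eq_nat_or_neg c
    · exact ⟨n • u, M.nsmul_mem hu n, n • v, M.nsmul_mem hv n, by rw [natCast_zsmul, nsmul_sub]⟩
    · exact ⟨n • v, M.nsmul_mem hv n, n • u, M.nsmul_mem hu n,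
        by rw [neg_smul, natCast_zsmul, nsmul_sub, neg_sub]⟩

theorem exists_toGpQuot_sub_eq (q : GpQuot M x y) :
    ∃ u v : M, toGpQuot M x y u - toGpQuot M x y v = q := by
  obtain ⟨⟨z, hz⟩, rfl⟩ := Submodule.Quotient.mk_surjective _ q
  obtain ⟨u, hu, v, hv, rfl⟩ := exists_sub_eq_of_mem_span hz
  exact ⟨⟨u, hu⟩, ⟨v, hv⟩, rfl⟩

theorem isAddTorsionFree_gpQuot_iff :
    IsAddTorsionFree (GpQuot M x y) ↔
      ∀ z ∈ Submodule.span ℤ (M : Set G), ∀ n : ℕ, 0 < n →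
        (∃ a : ℤ, (n : ℤ) • z = a • ((x : G) - y)) → ∃ b : ℤ, z = b • ((x : G) - y) := by
  have hmk (w : Submodule.span ℤ (M : Set G)) :
      (Submodule.Quotient.mk w : GpQuot M x y) = 0 ↔ ∃ b : ℤ, (w : G) = b • ((x : G) - y) := by
    rw [Submodule.Quotient.mk_eq_zero]
    simp [Submodule.mem_span_singleton, eq_comm]
  have hnsmul (n : ℕ) (w : Submodule.span ℤ (M : Set G)) :
      n • (Submodule.Quotient.mk w : GpQuot M x y) = 0 ↔
        ∃ a : ℤ, (n : ℤ) • (w : G) = a • ((x : G) - y) := by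
    rw [← natCast_zsmul, ← Submodule.Quotient.mk_smul, hmk]
    simp
  rw [isAddTorsionFree_iff_not_isOfFinAddOrder]
  constructor
  · intro h z hz n hn hnz
    by_contra hb
    exact h (mt (hmk ⟨z, hz⟩).1 hb)
      (isOfFinAddOrder_iff_nsmul_eq_zero.2 ⟨n, hn, (hnsmul n ⟨z, hz⟩).2 hnz⟩)
  · rintro h q hq0 hq
    obtain ⟨n, hn, hnq⟩ := isOfFinAddOrder_iff_nsmul_eq_zero.1 hq
    obtain ⟨⟨z, hz⟩, rfl⟩ := Submodule.Quotient.mk_surjective _ q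
    exact hq0 ((hmk _).2 (h z hz n hn ((hnsmul n _).1 hnq)))

theorem addMonoidFG_gpQuot (hM : M.FG) : AddMonoid.FG (GpQuot M x y) := by
  obtain ⟨S, rfl⟩ := hM
  have : Module.Finite ℤ (Submodule.span ℤ (AddSubmonoid.closure (S : Set G) : Set G)) := by
    rw [Submodule.span_closure]
    exact Module.Finite.span_finset ℤ S
  rw [← AddGroup.fg_iff_addMonoid_fg, ← Module.Finite.iff_addGroup_fg]
  infer_instance

end GpQuot

section Binomial

variable {K G : Type*} [CommRing K] [AddCommGroup G] {M : AddSubmonoid G} {x y : M}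

theorem isAddUnit_iff_neg_mem {w : M} : IsAddUnit w ↔ -(w : G) ∈ M := by
  refine ⟨fun h => ?_,
    fun h => isAddUnit_iff_exists_neg'.2 ⟨⟨-w, h⟩, Subtype.ext (neg_add_cancel _)⟩⟩
  obtain ⟨d, hd⟩ := isAddUnit_iff_exists_neg'.1 h
  rw [← eq_neg_of_add_eq_zero_left (congrArg Subtype.val hd)]
  exact d.2

theorem single_sub_single_mem_of_toGpQuot_eq {I : Ideal K[M]}
    (hI : single x 1 - single y 1 ∈ I) (hxI : ∀ r, single x 1 * r ∈ I → r ∈ I)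
    (hyI : ∀ r, single y 1 * r ∈ I → r ∈ I) {a b : M}
    (h : toGpQuot M x y a = toGpQuot M x y b) : single a 1 - single b 1 ∈ I := by
  obtain ⟨d, hd⟩ := toGpQuot_eq_iff.1 h
  obtain ⟨p, rfl | rfl⟩ := Int.eq_nat_or_neg d
  · refine mem_of_pow_mul_mem hyI p (single_pow_mul_sub_single_mem hI (Subtype.ext ?_))
    push_cast
    linear_combination (norm := module) hd
  · have hI' : single y 1 - single x 1 ∈ I := by rw [← neg_sub]; exact I.neg_mem hI
    refine mem_of_pow_mul_mem hxI p (single_pow_mul_sub_single_mem hI' (Subtype.ext ?_))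
    push_cast
    linear_combination (norm := module) hd

theorem isAddTorsionFree_gpQuot_of_isPrime [Nontrivial K]
    (hP : (Ideal.span {(single x 1 : K[M]) - single y 1}).IsPrime) :
    IsAddTorsionFree (GpQuot M x y) := by
  set I := Ideal.span {(single x 1 : K[M]) - single y 1}
  set φ := toGpQuot M x y
  have hIΦ : I ≤ RingHom.ker (mapDomainRingHom K φ) :=
    span_single_sub_single_le_ker _ (toGpQuot_eq_iff.2 ⟨1, (one_smul ℤ _).symm⟩)
  have hreg (a : M) (r : K[M]) (h : single a 1 * r ∈ I) : r ∈ I :=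
    (hP.mem_or_mem h).resolve_left (single_notMem_span_single_sub_single a x y)
  refine isAddTorsionFree_iff_not_isOfFinAddOrder.2 fun q hq0 hq => hq0 ?_
  obtain ⟨u, v, rfl⟩ := exists_toGpQuot_sub_eq q
  set k := addOrderOf (φ u - φ v)
  have hpow : (single u 1 : K[M]) ^ k - single v 1 ^ k ∈ I := by
    rw [single_pow, single_pow, one_pow]
    refine single_sub_single_mem_of_toGpQuot_eq (Ideal.mem_span_singleton_self _)
      (hreg x) (hreg y) ?_
    rw [map_nsmul, map_nsmul, ← sub_eq_zero, ← nsmul_sub]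
    exact addOrderOf_nsmul_eq_zero _
  rw [← geom_sum₂_mul] at hpow
  rcases hP.mem_or_mem hpow with hsum | hsub
  · refine absurd (hIΦ hsum) ?_
    rw [RingHom.mem_ker, map_sum]
    simpa [single_pow, single_mul_single] using
      sum_single_nsmul_add_nsmul_ne_zero (K := K) (φ u) (φ v) hq.addOrderOf_pos fun i hi h =>
        by_contra fun hi0 => (addOrderOf_le_of_nsmul_eq_zero (Nat.pos_of_ne_zero hi0) h).not_gt hi
  · have hΦ := hIΦ hsub
    rw [RingHom.mem_ker, map_sub, sub_eq_zero] at hΦ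
    simpa [sub_eq_zero, single_left_inj one_ne_zero] using hΦ

theorem isPrime_of_isRegSeq_of_isAddTorsionFree [IsDomain K] (hM : M.FG)
    (hreg : IsRegSeq [(single x 1 : K[M]), single y 1]) [IsAddTorsionFree (GpQuot M x y)] :
    (Ideal.span {(single x 1 : K[M]) - single y 1}).IsPrime := by
  obtain ⟨-, hx, hxy⟩ := isRegSeq_pair_iff.1 hreg
  have := addMonoidFG_gpQuot (x := x) (y := y) hM
  have hker : RingHom.ker (mapDomainRingHom K (toGpQuot M x y)) =
      Ideal.span {single x 1 - single y 1} :=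
    le_antisymm
      (ker_mapDomainRingHom_le _ fun _ _ => single_sub_single_mem_of_toGpQuot_eq
        (Ideal.mem_span_singleton_self _) (fun _ => mem_span_sub_of_mul_mem_left hx hxy)
        (fun _ => mem_span_sub_of_mul_mem_right hx hxy))
      (span_single_sub_single_le_ker _ (toGpQuot_eq_iff.2 ⟨1, (one_smul ℤ _).symm⟩))
  rw [← hker]
  exact RingHom.ker_isPrime _

end Binomial

/-- **Theorem (Bruns–Gubeladze, binomial prime criterion).**
Let `K` be a field, `M ⊆ ℤ^m` an affine monoid (a finitely generated submonoid), and
`x ≠ y` noninvertible elements of `M`.  The ideal of `K[M]` generated by `X^x − X^y` is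
prime if and only if (a) `X^x, X^y` is a `K[M]`-sequence, and (b) `gp(M)/ℤ(x−y)` is
torsionfree, i.e. whenever `z ∈ gp(M)` and `n > 0` satisfy that `n • z` is an integer
multiple of `x − y`, then `z` itself is an integer multiple of `x − y`. -/
theorem binomial_prime_iff {m : ℕ} (K : Type*) [Field K]
    (M : AddSubmonoid (Fin m → ℤ)) (hMfg : M.FG)
    (x y : M) (hx : -(x : Fin m → ℤ) ∉ M) (hy : -(y : Fin m → ℤ) ∉ M) (hxy : x ≠ y) :
    (Ideal.span {(single x 1 : AddMonoidAlgebra K M) - single y 1}).IsPrime ↔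
      (IsRegSeq [(single x 1 : AddMonoidAlgebra K M), single y 1] ∧
        ∀ z ∈ Submodule.span ℤ (M : Set (Fin m → ℤ)), ∀ n : ℕ, 0 < n →
          (∃ a : ℤ, (n : ℤ) • z = a • ((x : Fin m → ℤ) - (y : Fin m → ℤ))) →
          ∃ b : ℤ, z = b • ((x : Fin m → ℤ) - (y : Fin m → ℤ))) := by
  have : UniqueSums M :=
    UniqueSums.of_injective_addHom M.subtype.toAddHom Subtype.coe_injective inferInstance
  rw [← isAddTorsionFree_gpQuot_iff]
  refine ⟨fun hP => ⟨?_, isAddTorsionFree_gpQuot_of_isPrime hP⟩,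
    fun ⟨hreg, _⟩ => isPrime_of_isRegSeq_of_isAddTorsionFree hMfg hreg⟩
  exact isRegSeq_pair_of_isPrime
    (span_single_pair_ne_top (mt isAddUnit_iff_neg_mem.1 hx) (mt isAddUnit_iff_neg_mem.1 hy))
    ((single_left_inj one_ne_zero).not.2 hxy) hP (single_notMem_span_single_sub_single x x y)
end

section
/- Let K be a field, let M ⊆ ℤ^m, N ⊆ ℤ^q, and L ⊆ ℤ^p be affine monoids, and let φ : M × N → L be a surjective additive monoid homomorphism with rank L = rank M + rank N − 1. Suppose x ∈ M and y ∈ N satisfy φ(x, 0) = φ(0, y) and (x, y) ≠ (0, 0), that φ(w) ≠ 0 for all nonzero w ∈ M × N, that L is positive (u ∈ L and −u ∈ L imply u = 0), and that φ(x, 0) is unimodular in ℤ^p, i.e., there is a group homomorphism ψ : ℤ^p → ℤ with ψ(φ(x, 0)) = 1. Then: (1) the kernel of the induced surjective K-algebra homomorphism K[M × N] → K[L] (sending X^w to X^{φ(w)}) equals the ideal generated by X^{(x,0)} − X^{(0,y)}, so K[L] ≅ K[M × N]/(X^{(x,0)} − X^{(0,y)}); and (2) for every g ∈ ℤ^p the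 set {w ∈ M × N : φ(w) = g} is finite and (1 if g ∈ L, else 0) = #{w ∈ M × N : φ(w) = g} − #{w ∈ M × N : φ(w) = g − φ(x, 0)}. -/
open AddMonoidAlgebra

/-!
Extend `φ` to a linear map `F : gp(M) × gp(N) → ℤ^p`. Its range contains `gp(L)`, so by the
rank hypothesis `ker F` has rank at most one. It contains `δ = (x, -y)`, on which the linear form
`v ↦ ψ (F (v.1, 0))` takes the value `1`; hence `ker F = ℤ δ`, and any two elements of `M × N`
with the same image are `t + k • (0, y)` and `t + k • (x, 0)` for some `t` and `k`. Part (1)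
follows, as `X^(t + k(0,y)) - X^(t + k(x,0))` is a multiple of `X^(x,0) - X^(0,y)`.

For part (2), the fibres are finite by Dickson's lemma, because `φ` reflects `0`. Adding `(x, 0)`
maps the fibre over `g - φ(x,0)` onto the elements of the fibre over `g` of the form `v + (x, 0)`.
By the description of the fibres, at most one element of the fibre over `g` is not of this form,
and if the fibre is nonempty, the element minimising `ψ ∘ φ` on the first factor is one: trading
`(x, 0)` for `(0, y)` would lower that value by one.
-/

universe u

namespace AddSubmonoid

variable {G G₁ G₂ H : Type*} [AddCommGroup G] [AddCommGroup G₁] [AddCommGroup G₂]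
  [AddCommGroup H]

theorem mem_span_int_iff {P : AddSubmonoid G} {z : G} :
    z ∈ Submodule.span ℤ (P : Set G) ↔ ∃ a ∈ P, ∃ b ∈ P, a - b = z := by
  refine ⟨fun hz => ?_, fun ⟨a, ha, b, hb, hab⟩ => hab ▸
    Submodule.sub_mem _ (Submodule.subset_span ha) (Submodule.subset_span hb)⟩
  rw [← Submodule.mem_toAddSubgroup, Submodule.span_int_eq_addSubgroupClosure] at hz
  induction hz using AddSubgroup.closure_induction with
  | mem z hz => exact ⟨z, hz, 0, P.zero_mem, sub_zero z⟩
  | zero => exact ⟨0, P.zero_mem, 0, P.zero_mem, sub_zero 0⟩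
  | add _ _ _ _ ih ih' =>
    obtain ⟨a, ha, b, hb, rfl⟩ := ih
    obtain ⟨a', ha', b', hb', rfl⟩ := ih'
    exact ⟨a + a', P.add_mem ha ha', b + b', P.add_mem hb hb', by abel⟩
  | neg _ _ ih =>
    obtain ⟨a, ha, b, hb, rfl⟩ := ih
    exact ⟨b, hb, a, ha, (neg_sub a b).symm⟩

theorem exists_linearMap_span_extends (P : AddSubmonoid G) (f : P →+ H) :
    ∃ F : Submodule.span ℤ (P : Set G) →ₗ[ℤ] H,
      ∀ a : P, F ⟨a, Submodule.subset_span a.2⟩ = f a := by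
  have hwd : ∀ a b a' b' : P, (a - b : G) = a' - b' → f a - f b = f a' - f b' := by
    intro a b a' b' h
    have : a + b' = a' + b := Subtype.ext (by simpa [sub_eq_sub_iff_add_eq_add] using h)
    rw [sub_eq_sub_iff_add_eq_add, ← map_add, ← map_add, this]
  choose a ha b hb hab using fun z : Submodule.span ℤ (P : Set G) => mem_span_int_iff.mp z.2
  let F : Submodule.span ℤ (P : Set G) →+ H :=
    AddMonoidHom.mk' (fun z => f ⟨a z, ha z⟩ - f ⟨b z, hb z⟩) fun z z' => by
      rw [hwd _ _ (⟨a z, ha z⟩ + ⟨a z', ha z'⟩) (⟨b z, hb z⟩ + ⟨b z', hb z'⟩)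
        (by rw [coe_add, coe_add, add_sub_add_comm, hab, hab, hab, Submodule.coe_add])]
      simp only [map_add]; abel
  refine ⟨F.toIntLinearMap, fun c => ?_⟩
  exact (hwd ⟨a _, ha _⟩ ⟨b _, hb _⟩ c 0 (by simpa using hab _)).trans (by simp)

def inclSpanProd (M : AddSubmonoid G₁) (N : AddSubmonoid G₂) :
    M × N →+ Submodule.span ℤ (M : Set G₁) × Submodule.span ℤ (N : Set G₂) where
  toFun w := (⟨w.1, Submodule.subset_span w.1.2⟩, ⟨w.2, Submodule.subset_span w.2.2⟩)
  map_zero' := rfl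
  map_add' _ _ := rfl

theorem inclSpanProd_injective (M : AddSubmonoid G₁) (N : AddSubmonoid G₂) :
    Function.Injective (inclSpanProd M N) := fun w w' h => by
  simp only [inclSpanProd, AddMonoidHom.coe_mk, ZeroHom.coe_mk, Prod.ext_iff,
    Subtype.ext_iff] at h
  exact Prod.ext (Subtype.ext h.1) (Subtype.ext h.2)

theorem exists_linearMap_spanProd_extends (M : AddSubmonoid G₁) (N : AddSubmonoid G₂)
    (f : M × N →+ H) :
    ∃ F : Submodule.span ℤ (M : Set G₁) × Submodule.span ℤ (N : Set G₂) →ₗ[ℤ] H,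
      ∀ w, F (inclSpanProd M N w) = f w := by
  obtain ⟨FM, hFM⟩ := M.exists_linearMap_span_extends (f.comp (.inl M N))
  obtain ⟨FN, hFN⟩ := N.exists_linearMap_span_extends (f.comp (.inr M N))
  refine ⟨FM.coprod FN, fun w => ?_⟩
  simp [inclSpanProd, hFM, hFN, ← map_add]

end AddSubmonoid

theorem LinearMap.finrank_range_add_finrank_ker_of_finite {R : Type*} {M N : Type u} [Ring R]
    [StrongRankCondition R] [HasRankNullity.{u} R]
    [AddCommGroup M] [Module R M] [AddCommGroup N] [Module R N] [Module.Finite R M]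
    (f : M →ₗ[R] N) :
    Module.finrank R (LinearMap.range f) + Module.finrank R (LinearMap.ker f) =
      Module.finrank R M := by
  have hker : Module.rank R (LinearMap.ker f) < Cardinal.aleph0 :=
    (Submodule.rank_le _).trans_lt (Module.rank_lt_aleph0 R M)
  rw [Module.finrank, Module.finrank, ← Cardinal.toNat_add (Module.rank_lt_aleph0 R _) hker,
    f.rank_range_add_rank_ker, Module.finrank]

theorem eq_smul_of_finrank_le_one {R V : Type*} [CommRing R] [IsDomain R] [AddCommGroup V]
    [Module R V] [Module.IsTorsionFree R V] [Module.Finite R V] (hV : Module.finrank R V ≤ 1)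
    (χ : V →ₗ[R] R) {δ : V} (hδ : χ δ = 1) (d : V) : d = χ d • δ := by
  have hdep : ¬ LinearIndependent R ![d, δ] := fun h => by
    simpa using h.fintype_card_le_finrank.trans hV
  obtain ⟨s, t, hst, hne⟩ : ∃ s t : R, s • d + t • δ = 0 ∧ ¬(s = 0 ∧ t = 0) := by
    simpa [LinearIndependent.pair_iff] using hdep
  have ht : t = -(s * χ d) := by
    have := congr(χ $hst)
    simp only [map_add, map_smul, hδ, smul_eq_mul, mul_one, map_zero] at this
    linear_combination this
  have hs : s ≠ 0 := by rintro rfl; simp_all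
  have hsd : s • (d - χ d • δ) = 0 := by
    rw [← hst, ht]; module
  exact sub_eq_zero.mp ((smul_eq_zero.mp hsd).resolve_left hs)

theorem exists_nsmul_add_eq_of_sub_eq_zsmul {P G : Type*} [AddCommMonoid P] [AddCommGroup G]
    {ι : P →+ G} (hι : Function.Injective ι) {w w' a b : P} {j : ℤ}
    (h : ι w' - ι w = j • (ι a - ι b)) :
    ∃ k : ℕ, w' + k • b = w + k • a ∨ w + k • b = w' + k • a := by
  obtain ⟨k, rfl | rfl⟩ := Int.eq_nat_or_neg j
  · refine ⟨k, Or.inl (hι ?_)⟩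
    simp only [map_add, map_nsmul, ← natCast_zsmul]
    linear_combination (norm := module) h
  · refine ⟨k, Or.inr (hι ?_)⟩
    simp only [map_add, map_nsmul, ← natCast_zsmul]
    linear_combination (norm := module) -h

theorem Prod.eq_add_nsmul_of_add_nsmul_eq {A B : Type*} [AddCommMonoid A] [AddCommMonoid B]
    {w w' : A × B} {a : A} {b : B} {k : ℕ} (h : w' + k • (0, b) = w + k • (a, 0)) :
    w = (w.1, w'.2) + k • (0, b) ∧ w' = (w.1, w'.2) + k • (a, 0) := by
  simp only [Prod.ext_iff, Prod.fst_add, Prod.snd_add, Prod.smul_fst, Prod.smul_snd, smul_zero,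
    add_zero] at h
  exact ⟨Prod.ext (by simp) (by simp [h.2]), Prod.ext (by simp [h.1]) (by simp)⟩

namespace AddMonoidHom

variable {P Q : Type*} [AddCommMonoid P]

def FibersByExchange [AddMonoid Q] (f : P →+ Q) (a b : P) : Prop :=
  ∀ w w', f w = f w' → ∃ t : P, ∃ k : ℕ,
    (w = t + k • b ∧ w' = t + k • a) ∨ (w' = t + k • b ∧ w = t + k • a)

theorem finite_setOf_eq [AddMonoid.FG P] [AddCommMonoid Q] [IsLeftCancelAdd Q] (f : P →+ Q)
    (hf : ∀ z, f z = 0 → z = 0) (g : Q) : {w | f w = g}.Finite := by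
  obtain ⟨n, π, hπ⟩ := Module.Finite.exists_fin' ℕ P
  by_contra hinf
  let e := Set.Infinite.natEmbedding _ hinf
  choose c hc using fun k => hπ (e k)
  obtain ⟨k, l, hkl, hle⟩ :=
    (Set.isPWO_of_wellQuasiOrderedLE Set.univ).exists_lt (f := c) fun _ => trivial
  have hsplit : (e l : P) = e k + π (c l - c k) := by
    rw [← hc, ← hc, ← map_add, add_tsub_cancel_of_le hle]
  have hzero : π (c l - c k) = 0 := hf _ <| add_left_cancel (a := f (e k)) <| by
    rw [← map_add, ← hsplit, add_zero, (e l).2, (e k).2]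
  rw [hzero, add_zero, SetCoe.ext_iff, e.injective.eq_iff] at hsplit
  exact hkl.ne' hsplit

section Counting

variable {G : Type*} [AddCommGroup G] (f : P →+ G) {a b : P}

theorem image_add_setOf_eq_sub (g : G) :
    (· + a) '' {w | f w = g - f a} = {w | f w = g} ∩ Set.range (· + a) := by
  ext w
  constructor
  · rintro ⟨v, hv, rfl⟩
    exact ⟨show f (v + a) = g by rw [map_add, show f v = g - f a from hv, sub_add_cancel],
      v, rfl⟩
  · rintro ⟨hw, v, rfl⟩
    exact ⟨v, eq_sub_of_add_eq (by simpa using hw), rfl⟩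

theorem subsingleton_setOf_eq_diff_range_add (hexch : f.FibersByExchange a b) (g : G) :
    ({w | f w = g} \ Set.range (· + a)).Subsingleton := by
  rintro w₁ ⟨hw₁, hw₁'⟩ w₂ ⟨hw₂, hw₂'⟩
  obtain ⟨t, k, ⟨rfl, rfl⟩ | ⟨rfl, rfl⟩⟩ := hexch _ _ (hw₁.trans hw₂.symm)
  all_goals rcases k with _ | k
  · simp
  · exact absurd ⟨t + k • a, by simp only [succ_nsmul, add_assoc]⟩ hw₂'
  · simp
  · exact absurd ⟨t + k • a, by simp only [succ_nsmul, add_assoc]⟩ hw₁'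

theorem ncard_setOf_eq_diff_range_add (hab : f a = f b) (hexch : f.FibersByExchange a b)
    (χ : P →+ ℤ) (hχ : χ b < χ a) {g : G} (hfin : {w | f w = g}.Finite) :
    ({w | f w = g} \ Set.range (· + a)).ncard = Set.indicator (Set.range f) (fun _ => 1) g := by
  by_cases hg : g ∈ Set.range f
  · rw [Set.indicator_of_mem hg, Set.ncard_eq_one]
    obtain ⟨w, hw, hmin⟩ := Set.exists_min_image _ χ hfin hg
    refine ⟨w, (subsingleton_setOf_eq_diff_range_add f hexch g).eq_singleton_of_mem ⟨hw, ?_⟩⟩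
    rintro ⟨v, rfl⟩
    have := hmin (v + b) (by simpa [← hab] using hw)
    simp only [map_add, add_le_add_iff_left] at this
    exact this.not_gt hχ
  · have : {w | f w = g} = ∅ := Set.eq_empty_of_forall_notMem fun w hw => hg ⟨w, hw⟩
    simp [this, hg]

theorem indicator_range_add_ncard_setOf_eq_sub [IsRightCancelAdd P] (hab : f a = f b)
    (hexch : f.FibersByExchange a b) (χ : P →+ ℤ) (hχ : χ b < χ a)
    (hfin : ∀ g, {w | f w = g}.Finite) (g : G) :
    Set.indicator (Set.range f) (fun _ => 1) g + {w | f w = g - f a}.ncard =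
      {w | f w = g}.ncard := by
  rw [← ncard_setOf_eq_diff_range_add f hab hexch χ hχ (hfin g),
    ← Set.ncard_image_of_injective {w | f w = g - f a} (add_left_injective a),
    image_add_setOf_eq_sub, add_comm,
    Set.ncard_inter_add_ncard_sdiff_eq_ncard _ _ (hfin g)]

end Counting

end AddMonoidHom

namespace AddMonoidAlgebra

theorem ker_mapDomainRingHom_le {R A B : Type*} [Ring R] [AddMonoid A] [AddMonoid B]
    (f : A →+ B) {I : Ideal R[A]}
    (hI : ∀ a a', f a = f a' → (single a 1 - single a' 1 : R[A]) ∈ I) :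
    RingHom.ker (mapDomainRingHom R f) ≤ I := by
  let σ : A → A := fun a => Function.invFun f (f a)
  have hσ : ∀ a, f (σ a) = f a := fun a => Function.invFun_eq ⟨a, rfl⟩
  have hsub (c : R[A]) : c - mapDomain σ c ∈ I := by
    induction c using AddMonoidAlgebra.induction_linear with
    | zero => simp
    | add c c' h h' => simpa [mapDomain_add, add_sub_add_comm] using add_mem h h'
    | single a r =>
      have : (single a r - single (σ a) r : R[A]) =
          single 0 r * (single a 1 - single (σ a) 1) := by
        rw [mul_sub, single_mul_single, single_mul_single, zero_add, zero_add, mul_one]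
      simpa [this] using I.mul_mem_left _ (hI a (σ a) (hσ a).symm)
  intro c hc
  have hcomp : mapDomain σ c = mapDomain (Function.invFun f) (mapDomainRingHom R f c) := by
    ext
    simp only [coeff_mapDomain, mapDomainRingHom_apply]
    rw [← Finsupp.mapDomain_comp]
    rfl
  rw [RingHom.mem_ker] at hc
  simpa [hcomp, hc] using hsub c

variable {R A : Type*} [CommRing R] [AddCommMonoid A]

theorem single_add_nsmul_sub_mem_span (a b t : A) (k : ℕ) :
    (single (t + k • b) 1 - single (t + k • a) 1 : R[A]) ∈
      Ideal.span {single a 1 - single b 1} := by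
  have : (single (t + k • b) 1 - single (t + k • a) 1 : R[A]) =
      -(single t 1 * ((single a 1) ^ k - (single b 1) ^ k)) := by
    simp only [single_pow, one_pow, single_mul_single, mul_one, mul_sub, neg_sub]
  rw [Ideal.mem_span_singleton, this]
  exact ((sub_dvd_pow_sub_pow _ _ k).mul_left _).neg_right

theorem ker_mapDomainRingHom_eq_span {B : Type*} [AddMonoid B] (f : A →+ B) {a b : A}
    (hab : f a = f b) (hexch : f.FibersByExchange a b) :
    RingHom.ker (mapDomainRingHom R f) = Ideal.span {single a 1 - single b 1} := by
  refine le_antisymm (ker_mapDomainRingHom_le f fun w w' h => ?_) ?_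
  · obtain ⟨t, k, ⟨rfl, rfl⟩ | ⟨rfl, rfl⟩⟩ := hexch w w' h
    · exact single_add_nsmul_sub_mem_span a b t k
    · simpa using neg_mem (single_add_nsmul_sub_mem_span (R := R) a b t k)
  · rw [Ideal.span_le, Set.singleton_subset_iff, SetLike.mem_coe, RingHom.mem_ker, map_sub]
    simp [hab]

end AddMonoidAlgebra

theorem fibersByExchange_of_finrank {m q p : ℕ} {M : AddSubmonoid (Fin m → ℤ)}
    {N : AddSubmonoid (Fin q → ℤ)} {L : AddSubmonoid (Fin p → ℤ)} (φ : M × N →+ L)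
    (hφsurj : Function.Surjective φ)
    (hrank : Module.finrank ℤ (Submodule.span ℤ (L : Set (Fin p → ℤ))) + 1 =
      Module.finrank ℤ (Submodule.span ℤ (M : Set (Fin m → ℤ))) +
        Module.finrank ℤ (Submodule.span ℤ (N : Set (Fin q → ℤ))))
    {x : M} {y : N} (hφxy : φ (x, 0) = φ (0, y)) (ψ : (Fin p → ℤ) →+ ℤ)
    (hψ : ψ (φ (x, 0) : Fin p → ℤ) = 1) :
    φ.FibersByExchange (x, 0) (0, y) := by
  intro w w' h
  let ι := AddSubmonoid.inclSpanProd M N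
  obtain ⟨F, hF⟩ := AddSubmonoid.exists_linearMap_spanProd_extends M N (L.subtype.comp φ)
  have hrange : Submodule.span ℤ (L : Set (Fin p → ℤ)) ≤ LinearMap.range F := by
    rw [Submodule.span_le]
    intro l hl
    obtain ⟨w, hw⟩ := hφsurj ⟨l, hl⟩
    exact ⟨ι w, by simp [ι, hF, hw]⟩
  have hker : Module.finrank ℤ (LinearMap.ker F) ≤ 1 := by
    have := F.finrank_range_add_finrank_ker_of_finite
    have := Submodule.finrank_mono hrange
    rw [Module.finrank_prod] at *
    omega
  let χ : LinearMap.ker F →ₗ[ℤ] ℤ := ψ.toIntLinearMap ∘ₗ F ∘ₗ LinearMap.inl ℤ _ _ ∘ₗ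
    LinearMap.fst ℤ _ _ ∘ₗ (LinearMap.ker F).subtype
  have hδ : ι (x, 0) - ι (0, y) ∈ LinearMap.ker F := by
    simp [LinearMap.mem_ker, ι, hF, hφxy]
  have hd : ι w' - ι w ∈ LinearMap.ker F := by
    simp [LinearMap.mem_ker, ι, hF, h]
  have hχ : χ ⟨_, hδ⟩ = 1 := by
    have hfst : ((ι (x, 0) - ι (0, y)).1, 0) = ι (x, 0) := by
      ext <;> simp [ι, AddSubmonoid.inclSpanProd]
    change ψ (F ((ι (x, 0) - ι (0, y)).1, 0)) = 1
    rw [hfst, hF]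
    exact hψ
  have hdδ := congr_arg Subtype.val (eq_smul_of_finrank_le_one hker χ hχ ⟨_, hd⟩)
  obtain ⟨k, hk | hk⟩ :=
    exists_nsmul_add_eq_of_sub_eq_zsmul (AddSubmonoid.inclSpanProd_injective M N) hdδ
  · exact ⟨_, k, Or.inl (Prod.eq_add_nsmul_of_add_nsmul_eq hk)⟩
  · exact ⟨_, k, Or.inr (Prod.eq_add_nsmul_of_add_nsmul_eq hk)⟩

theorem free_sum_quotient_general {m q p : ℕ} (K : Type*) [Field K]
    (M : AddSubmonoid (Fin m → ℤ)) (hMfg : M.FG)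
    (N : AddSubmonoid (Fin q → ℤ)) (hNfg : N.FG)
    (L : AddSubmonoid (Fin p → ℤ))
    (φ : M × N →+ L) (hφsurj : Function.Surjective φ)
    (hrank : Module.finrank ℤ (Submodule.span ℤ (L : Set (Fin p → ℤ))) + 1 =
      Module.finrank ℤ (Submodule.span ℤ (M : Set (Fin m → ℤ))) +
        Module.finrank ℤ (Submodule.span ℤ (N : Set (Fin q → ℤ))))
    (x : M) (y : N) (hφxy : φ (x, 0) = φ (0, y))
    (hφ0 : ∀ w : M × N, w ≠ 0 → φ w ≠ 0)
    (hunimod : ∃ ψ : (Fin p → ℤ) →+ ℤ, ψ ((φ (x, 0) : L) : Fin p → ℤ) = 1) :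
    (RingHom.ker (mapDomainRingHom K φ) =
      Ideal.span {(single ((x, 0) : M × N) 1 : AddMonoidAlgebra K (M × N)) -
        single ((0, y) : M × N) 1}) ∧
    ∀ g : Fin p → ℤ,
      {w : M × N | ((φ w : L) : Fin p → ℤ) = g}.Finite ∧
      Set.indicator (L : Set (Fin p → ℤ)) (fun _ => (1 : ℕ)) g +
          {w : M × N | ((φ w : L) : Fin p → ℤ) =
            g - ((φ (x, 0) : L) : Fin p → ℤ)}.ncard =
        {w : M × N | ((φ w : L) : Fin p → ℤ) = g}.ncard := by
  obtain ⟨ψ, hψ⟩ := hunimod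
  have hexch := fibersByExchange_of_finrank φ hφsurj hrank hφxy ψ hψ
  let f : M × N →+ Fin p → ℤ := L.subtype.comp φ
  have hf0 : ∀ w, f w = 0 → w = 0 := fun w hw => by_contra fun h => hφ0 w h (Subtype.ext hw)
  have hrange : Set.range f = L := by
    simp [f, Set.range_comp, hφsurj.range_eq]
  have := (AddMonoid.fg_iff_addSubmonoid_fg M).mpr hMfg
  have := (AddMonoid.fg_iff_addSubmonoid_fg N).mpr hNfg
  let χ : M × N →+ ℤ := (ψ.comp f).comp ((AddMonoidHom.inl M N).comp (AddMonoidHom.fst M N))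
  refine ⟨AddMonoidAlgebra.ker_mapDomainRingHom_eq_span φ hφxy hexch,
    fun g => ⟨f.finite_setOf_eq hf0 g, ?_⟩⟩
  rw [← hrange]
  exact f.indicator_range_add_ncard_setOf_eq_sub (congr_arg Subtype.val hφxy)
    (fun w w' h => hexch w w' (Subtype.ext h)) χ (by simp [χ, f, Prod.mk_zero_zero, hψ])
    (f.finite_setOf_eq hf0) g

/-- **Corollary 2.5.** Let `K` be a field, `M ⊆ ℤ^m`, `N ⊆ ℤ^q`, `L ⊆ ℤ^p` affine
monoids, and `φ : M ⊕ N → L` a surjective homomorphism with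
`rank L = rank M + rank N − 1`.  Suppose `φ(x,0) = φ(0,y)` with `(x,y) ≠ (0,0)`,
`φ(w) ≠ 0` for nonzero `w`, `L` is positive, and `g₀ = φ(x,0)` is unimodular in `ℤ^p`.
Then `K[L] ≅ K[M ⊕ N]/(X^{(x,0)} − X^{(0,y)})` and `H_L = (1 − T^{g₀}) H_{M⊕N}`
coefficientwise. -/
theorem free_sum_quotient {m q p : ℕ} (K : Type*) [Field K]
    (M : AddSubmonoid (Fin m → ℤ)) (hMfg : M.FG)
    (N : AddSubmonoid (Fin q → ℤ)) (hNfg : N.FG)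
    (L : AddSubmonoid (Fin p → ℤ)) (hLfg : L.FG)
    (φ : M × N →+ L) (hφsurj : Function.Surjective φ)
    (hrank : Module.finrank ℤ (Submodule.span ℤ (L : Set (Fin p → ℤ))) + 1 =
      Module.finrank ℤ (Submodule.span ℤ (M : Set (Fin m → ℤ))) +
        Module.finrank ℤ (Submodule.span ℤ (N : Set (Fin q → ℤ))))
    (x : M) (y : N) (hφxy : φ (x, 0) = φ (0, y)) (hxy0 : (x, y) ≠ (0, 0))
    (hφ0 : ∀ w : M × N, w ≠ 0 → φ w ≠ 0)
    (hLpos : ∀ v : Fin p → ℤ, v ∈ L → -v ∈ L → v = 0)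
    (hunimod : ∃ ψ : (Fin p → ℤ) →+ ℤ, ψ ((φ (x, 0) : L) : Fin p → ℤ) = 1) :
    (RingHom.ker (mapDomainRingHom K φ) =
      Ideal.span {(single ((x, 0) : M × N) 1 : AddMonoidAlgebra K (M × N)) -
        single ((0, y) : M × N) 1}) ∧
    ∀ g : Fin p → ℤ,
      {w : M × N | ((φ w : L) : Fin p → ℤ) = g}.Finite ∧
      Set.indicator (L : Set (Fin p → ℤ)) (fun _ => (1 : ℕ)) g +
          {w : M × N | ((φ w : L) : Fin p → ℤ) =
            g - ((φ (x, 0) : L) : Fin p → ℤ)}.ncard =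
        {w : M × N | ((φ w : L) : Fin p → ℤ) = g}.ncard :=
  free_sum_quotient_general K M hMfg N hNfg L φ hφsurj hrank x y hφxy hφ0 hunimod
end

section
/- Let K be a field and let A, B ⊆ ℤ^m be finite subsets such that A ∪ B is the free sum of A and B, i.e., 0 ∈ A ∩ B and the ℝ-linear spans of A and B in ℝ^m intersect only in 0. Let x = ((0,1), 0) and y = (0, (0,1)) in M(A) × M(B). Then the kernel of the surjective K-algebra homomorphism K[M(A) × M(B)] → K[M(A ∪ B)] induced by the addition map ℤ^{m+1} × ℤ^{m+1} → ℤ^{m+1}, (u, v) ↦ u + v, equals the ideal generated by X^x − X^y; that is, K[M(A ∪ B)] ≅ K[M(A) × M(B)]/(X^x − X^y). -/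
/-!
The addition map `M(A) × M(B) → M(A ∪ B)` is onto because `M(A ∪ B) = M(A) + M(B)`, and the
kernel of the map of monoid algebras induced by any monoid map is spanned by the binomials
`X^u - X^v` with `u, v` in a common fibre. If `(a, b)` and `(a', b')` have the same sum, then
the `ℤ^m`-parts of `a - a'` and `b' - b` coincide and lie in `ℝA ∩ ℝB = 0`; so `a = a' + d x`
and `b' = b + d y` for some `d ∈ ℕ` (up to swapping), and `X^x - X^y` divides
`X^{(a, b)} - X^{(a', b')} = X^{(a', b)} (X^{d x} - X^{d y})`.
-/

open AddMonoidAlgebra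

/-- For `A ⊆ ℤ^m`, `M(A)` is the submonoid of `ℤ^{m+1} = ℤ^m × ℤ` generated by the
elements `(a, 1)`, `a ∈ A`. -/
def MofSet {m : ℕ} (A : Set (Fin m → ℤ)) : AddSubmonoid ((Fin m → ℤ) × ℤ) :=
  AddSubmonoid.closure ((fun a => (a, (1 : ℤ))) '' A)

/-- The monoid homomorphism `M(A) ⊕ M(B) → M(A ∪ B)` induced by addition in `ℤ^{m+1}`. -/
def sumHom {m : ℕ} (A B : Set (Fin m → ℤ)) : MofSet A × MofSet B →+ MofSet (A ∪ B) where
  toFun w := ⟨(w.1 : (Fin m → ℤ) × ℤ) + (w.2 : (Fin m → ℤ) × ℤ),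
    add_mem
      (AddSubmonoid.closure_mono (Set.image_mono Set.subset_union_left) w.1.2)
      (AddSubmonoid.closure_mono (Set.image_mono Set.subset_union_right) w.2.2)⟩
  map_zero' := by apply Subtype.ext; simp
  map_add' a b := by apply Subtype.ext; push_cast; exact add_add_add_comm _ _ _ _

namespace AddMonoidAlgebra

variable {R G H : Type*} [AddCommMonoid G] [AddCommMonoid H]

theorem mapDomainRingHom_surjective [Semiring R] {f : G →+ H} (hf : Function.Surjective f) :
    Function.Surjective (mapDomainRingHom R f) := by
  intro q
  obtain ⟨p, hp⟩ := Finsupp.mapDomain_surjective hf q.coeff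
  exact ⟨ofCoeff p, by ext; simp [hp]⟩

theorem ker_mapDomainRingHom_le_s8 [CommRing R] {f : G →+ H} {I : Ideal R[G]}
    (hI : ∀ u v, f u = f v → (single u 1 - single v 1 : R[G]) ∈ I) :
    RingHom.ker (mapDomainRingHom R f) ≤ I := by
  -- Going to `H` along `f` and back along a section of `f` moves each monomial within its fibre.
  have h_sub : ∀ p : R[G], p - mapDomain (Function.invFun f) (mapDomain f p) ∈ I := by
    intro p
    induction p using induction_linear with
    | zero => simp
    | add p q hp hq => simpa only [mapDomain_add, add_sub_add_comm] using add_mem hp hq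
    | single u r =>
      have hfib : f (Function.invFun f (f u)) = f u := Function.invFun_eq ⟨u, rfl⟩
      simpa [mul_sub, single_mul_single] using I.mul_mem_left (single 0 r) (hI _ _ hfib.symm)
  intro p hp
  simpa [show mapDomain f p = 0 from hp] using h_sub p

theorem single_add_nsmul_sub_single_add_nsmul_mem_span [CommRing R] (w x y : G) (d : ℕ) :
    (single (w + d • x) 1 - single (w + d • y) 1 : R[G]) ∈
      Ideal.span {single x 1 - single y 1} := by
  have hpow : ∀ z : G, (single (w + d • z) 1 : R[G]) = single w 1 * single z 1 ^ d := by
    intro z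
    rw [single_pow, one_pow, single_mul_single, one_mul]
  rw [Ideal.mem_span_singleton, hpow, hpow, ← mul_sub]
  exact dvd_mul_of_dvd_right (sub_dvd_pow_sub_pow _ _ d) _

end AddMonoidAlgebra

theorem sumHom_surjective {m : ℕ} (A B : Set (Fin m → ℤ)) :
    Function.Surjective (sumHom A B) := by
  rintro ⟨x, hx⟩
  rw [MofSet, Set.image_union, AddSubmonoid.closure_union, AddSubmonoid.mem_sup] at hx
  obtain ⟨y, hy, z, hz, rfl⟩ := hx
  exact ⟨(⟨y, hy⟩, ⟨z, hz⟩), rfl⟩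

def realSpan {m : ℕ} (A : Set (Fin m → ℤ)) : Submodule ℝ (Fin m → ℝ) :=
  Submodule.span ℝ ((fun (z : Fin m → ℤ) (i : Fin m) => (z i : ℝ)) '' A)

namespace MofSet

variable {m : ℕ} {A B : Set (Fin m → ℤ)}

def gen {a : Fin m → ℤ} (ha : a ∈ A) : MofSet A :=
  ⟨(a, 1), AddSubmonoid.subset_closure ⟨a, ha, rfl⟩⟩

theorem cast_fst_mem_realSpan {x : (Fin m → ℤ) × ℤ} (hx : x ∈ MofSet A) :
    (Int.castAddHom ℝ).compLeft (Fin m) x.1 ∈ realSpan A := by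
  have hle : MofSet A ≤ (realSpan A).toAddSubmonoid.comap
      (((Int.castAddHom ℝ).compLeft (Fin m)).comp (AddMonoidHom.fst _ _)) :=
    AddSubmonoid.closure_le.2 <| by
      rintro _ ⟨a, ha, rfl⟩
      exact Submodule.subset_span ⟨a, ha, rfl⟩
  exact hle hx

theorem fst_eq_of_add_eq_add (hAB : Disjoint (realSpan A) (realSpan B))
    {x x' y y' : (Fin m → ℤ) × ℤ} (hx : x ∈ MofSet A) (hx' : x' ∈ MofSet A)
    (hy : y ∈ MofSet B) (hy' : y' ∈ MofSet B) (h : x + y = x' + y') : x.1 = x'.1 := by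
  let c := (Int.castAddHom ℝ).compLeft (Fin m)
  have hfst : x.1 + y.1 = x'.1 + y'.1 := congrArg Prod.fst h
  have hc : c (x.1 - x'.1) = c (y'.1 - y.1) := congrArg c (by linear_combination hfst)
  have hc0 : c (x.1 - x'.1) = 0 := by
    refine Submodule.disjoint_def'.1 hAB _ ?_ _ ?_ hc <;> rw [map_sub]
    · exact sub_mem (cast_fst_mem_realSpan hx) (cast_fst_mem_realSpan hx')
    · exact sub_mem (cast_fst_mem_realSpan hy') (cast_fst_mem_realSpan hy)
  exact sub_eq_zero.1 ((injective_iff_map_eq_zero c).1 Int.cast_injective.comp_left _ hc0)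

theorem single_sub_single_mem_span_of_sumHom_eq_of_le {K : Type*} [CommRing K]
    (hAB : Disjoint (realSpan A) (realSpan B)) (h0A : (0 : Fin m → ℤ) ∈ A)
    (h0B : (0 : Fin m → ℤ) ∈ B) {u v : MofSet A × MofSet B} (h : sumHom A B u = sumHom A B v)
    (hle : (v.1 : (Fin m → ℤ) × ℤ).2 ≤ (u.1 : (Fin m → ℤ) × ℤ).2) :
    (single u 1 - single v 1 : K[MofSet A × MofSet B]) ∈
      Ideal.span {single (gen h0A, 0) 1 - single (0, gen h0B) 1} := by
  obtain ⟨⟨x, hx⟩, ⟨y, hy⟩⟩ := u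
  obtain ⟨⟨x', hx'⟩, ⟨y', hy'⟩⟩ := v
  have hsum : x + y = x' + y' := congrArg Subtype.val h
  have hsnd : x.2 + y.2 = x'.2 + y'.2 := congrArg Prod.snd hsum
  obtain ⟨d, hd⟩ := Int.eq_ofNat_of_zero_le (sub_nonneg.2 hle)
  dsimp only at hd
  have hfst₁ : x.1 = x'.1 := fst_eq_of_add_eq_add hAB hx hx' hy hy' hsum
  have hfst₂ : y.1 = y'.1 := by
    have hfst : x.1 + y.1 = x'.1 + y'.1 := congrArg Prod.fst hsum
    rwa [hfst₁, add_right_inj] at hfst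
  have hu : ((⟨x, hx⟩, ⟨y, hy⟩) : MofSet A × MofSet B) =
      (⟨x', hx'⟩, ⟨y, hy⟩) + d • (gen h0A, 0) :=
    Prod.ext (Subtype.ext (Prod.ext (by simp [gen, hfst₁]) (by simp [gen]; omega))) (by simp)
  have hv : ((⟨x', hx'⟩, ⟨y', hy'⟩) : MofSet A × MofSet B) =
      (⟨x', hx'⟩, ⟨y, hy⟩) + d • (0, gen h0B) :=
    Prod.ext (by simp) (Subtype.ext (Prod.ext (by simp [gen, hfst₂]) (by simp [gen]; omega)))
  rw [hu, hv]
  exact single_add_nsmul_sub_single_add_nsmul_mem_span _ _ _ d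

theorem single_sub_single_mem_span_of_sumHom_eq {K : Type*} [CommRing K]
    (hAB : Disjoint (realSpan A) (realSpan B)) (h0A : (0 : Fin m → ℤ) ∈ A)
    (h0B : (0 : Fin m → ℤ) ∈ B) {u v : MofSet A × MofSet B} (h : sumHom A B u = sumHom A B v) :
    (single u 1 - single v 1 : K[MofSet A × MofSet B]) ∈
      Ideal.span {single (gen h0A, 0) 1 - single (0, gen h0B) 1} := by
  rcases le_total (v.1 : (Fin m → ℤ) × ℤ).2 (u.1 : (Fin m → ℤ) × ℤ).2 with hle | hle
  · exact single_sub_single_mem_span_of_sumHom_eq_of_le (K := K) hAB h0A h0B h hle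
  · simpa only [neg_sub] using
      neg_mem (single_sub_single_mem_span_of_sumHom_eq_of_le (K := K) hAB h0A h0B h.symm hle)

end MofSet

open MofSet

theorem free_sum_pointconfig_ker_general {m : ℕ} (K : Type*) [Field K]
    (A B : Set (Fin m → ℤ))
    (h0A : (0 : Fin m → ℤ) ∈ A) (h0B : (0 : Fin m → ℤ) ∈ B)
    (hspan : Submodule.span ℝ ((fun (z : Fin m → ℤ) (i : Fin m) => (z i : ℝ)) '' A) ⊓
      Submodule.span ℝ ((fun (z : Fin m → ℤ) (i : Fin m) => (z i : ℝ)) '' B) = ⊥) :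
    Function.Surjective (mapDomainRingHom K (sumHom A B)) ∧
    RingHom.ker (mapDomainRingHom K (sumHom A B)) =
      Ideal.span {(single ((⟨((0 : Fin m → ℤ), (1 : ℤ)), AddSubmonoid.subset_closure
            ⟨0, h0A, rfl⟩⟩, 0) : MofSet A × MofSet B) 1 : AddMonoidAlgebra K (MofSet A × MofSet B)) -
          single ((0, ⟨((0 : Fin m → ℤ), (1 : ℤ)), AddSubmonoid.subset_closure
            ⟨0, h0B, rfl⟩⟩) : MofSet A × MofSet B) 1} := by
  have hAB : Disjoint (realSpan A) (realSpan B) := disjoint_iff.2 hspan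
  refine ⟨mapDomainRingHom_surjective (sumHom_surjective A B), le_antisymm ?_ ?_⟩
  · exact ker_mapDomainRingHom_le_s8 fun u v h ↦
      single_sub_single_mem_span_of_sumHom_eq hAB h0A h0B h
  · rw [Ideal.span_le, Set.singleton_subset_iff, SetLike.mem_coe, RingHom.mem_ker, map_sub,
      mapDomainRingHom_apply, mapDomainRingHom_apply, mapDomain_single, mapDomain_single,
      sub_eq_zero]
    congr 1

/-- **Corollary 2.6(1).** Let `A, B ⊆ ℤ^m` be finite sets such that `A ∪ B` is the free
sum of `A` and `B` (`0 ∈ A ∩ B` and `ℝA ∩ ℝB = 0`).  With `x = ((0,1), 0)` and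
`y = (0, (0,1))` in `M(A) ⊕ M(B)`, the kernel of the surjection
`K[M(A) ⊕ M(B)] → K[M(A ∪ B)]` induced by addition is generated by `X^x − X^y`, i.e.
`K[M(A ∪ B)] ≅ K[M(A) ⊕ M(B)]/(X^x − X^y)`. -/
theorem free_sum_pointconfig_ker {m : ℕ} (K : Type*) [Field K]
    (A B : Set (Fin m → ℤ)) (hAfin : A.Finite) (hBfin : B.Finite)
    (h0A : (0 : Fin m → ℤ) ∈ A) (h0B : (0 : Fin m → ℤ) ∈ B)
    (hspan : Submodule.span ℝ ((fun (z : Fin m → ℤ) (i : Fin m) => (z i : ℝ)) '' A) ⊓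
      Submodule.span ℝ ((fun (z : Fin m → ℤ) (i : Fin m) => (z i : ℝ)) '' B) = ⊥) :
    Function.Surjective (mapDomainRingHom K (sumHom A B)) ∧
    RingHom.ker (mapDomainRingHom K (sumHom A B)) =
      Ideal.span {(single ((⟨((0 : Fin m → ℤ), (1 : ℤ)), AddSubmonoid.subset_closure
            ⟨0, h0A, rfl⟩⟩, 0) : MofSet A × MofSet B) 1 : AddMonoidAlgebra K (MofSet A × MofSet B)) -
          single ((0, ⟨((0 : Fin m → ℤ), (1 : ℤ)), AddSubmonoid.subset_closure
            ⟨0, h0B, rfl⟩⟩) : MofSet A × MofSet B) 1} :=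
  free_sum_pointconfig_ker_general K A B h0A h0B hspan
end

section
/- Let A, B ⊆ ℤ^m be finite subsets such that A ∪ B is the free sum of A and B, i.e., 0 ∈ A ∩ B and the ℝ-linear spans of A and B in ℝ^m intersect only in 0. Then for every g ∈ ℤ^{m+1} the set {(u, v) ∈ M(A) × M(B) : u + v = g} is finite and (1 if g ∈ M(A ∪ B), else 0) = #{(u, v) ∈ M(A) × M(B) : u + v = g} − #{(u, v) ∈ M(A) × M(B) : u + v = g − (0, 1)}, where (0,1) ∈ ℤ^m × ℤ = ℤ^{m+1}. -/
/-!
Write `e = (0, 1)`. When `A ∪ B` is a free sum, the `ℤ^m`-parts of `u ∈ M(A)` and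
`v ∈ M(B)` with `u + v = g` are determined by `g`, so a solution `(u, v)` is determined by the
height of `u`, and any two solutions differ by moving a multiple of `e` from one side to the
other. Hence `(u, v) ↦ (u, v + e)` maps the solutions for `g - e` bijectively onto the
solutions for `g` with `v - e ∈ M(B)`, and among the solutions for `g` exactly one, the one of
largest `u`-height, has `v - e ∉ M(B)`, as long as there is any solution at all, i.e. as long
as `g ∈ M(A) + M(B) = M(A ∪ B)`.
-/

section SumFiber

variable {G : Type*} [AddCommMonoid G]

def sumFiber (N₁ N₂ : AddSubmonoid G) (g : G) : Set (N₁ × N₂) :=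
  {w | (w.1 : G) + w.2 = g}

theorem mem_sup_iff_sumFiber_nonempty {N₁ N₂ : AddSubmonoid G} {g : G} :
    g ∈ N₁ ⊔ N₂ ↔ (sumFiber N₁ N₂ g).Nonempty := by
  rw [AddSubmonoid.mem_sup]
  constructor
  · rintro ⟨u, hu, v, hv, huv⟩
    exact ⟨(⟨u, hu⟩, ⟨v, hv⟩), huv⟩
  · rintro ⟨w, hw⟩
    exact ⟨w.1, w.1.2, w.2, w.2.2, hw⟩

end SumFiber

theorem ncard_sumFiber_sub {G : Type*} [AddCommGroup G] {N₁ N₂ : AddSubmonoid G} {e : G}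
    (he : e ∈ N₂) (g : G) :
    (sumFiber N₁ N₂ (g - e)).ncard = {w ∈ sumFiber N₁ N₂ g | (w.2 : G) - e ∈ N₂}.ncard := by
  refine Set.ncard_congr (fun w _ => (w.1, ⟨w.2 + e, add_mem w.2.2 he⟩)) ?_ ?_ ?_
  · intro w hw
    refine ⟨?_, by simp⟩
    simp only [sumFiber, Set.mem_ofPred_eq] at hw ⊢
    rw [← add_assoc, hw, sub_add_cancel]
  · rintro w w' - - h
    simp only [Prod.mk.injEq, Subtype.mk.injEq, add_left_inj] at h
    exact Prod.ext h.1 (Subtype.ext h.2)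
  · rintro w ⟨hw, hsub⟩
    refine ⟨(w.1, ⟨_, hsub⟩), ?_, by simp⟩
    simp only [sumFiber, Set.mem_ofPred_eq] at hw ⊢
    rw [← hw, add_sub_assoc]

section Graded

variable {H : Type*} [AddCommGroup H]

/-- The free-sum condition, in the form in which it enters the count. -/
def FstUniqueDecomposition (N₁ N₂ : AddSubmonoid (H × ℤ)) : Prop :=
  ∀ ⦃u u' v v' : H × ℤ⦄, u ∈ N₁ → u' ∈ N₁ → v ∈ N₂ → v' ∈ N₂ → u + v = u' + v' → u.1 = u'.1

variable {N₁ N₂ : AddSubmonoid (H × ℤ)}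

theorem FstUniqueDecomposition.injOn_sumFiber (hN : FstUniqueDecomposition N₁ N₂)
    (g : H × ℤ) : Set.InjOn (fun w : N₁ × N₂ => (w.1 : H × ℤ).2) (sumFiber N₁ N₂ g) := by
  rintro ⟨⟨u, hu⟩, ⟨v, hv⟩⟩ hw ⟨⟨u', hu'⟩, ⟨v', hv'⟩⟩ hw' hsnd
  have hsum : u + v = u' + v' := hw.trans hw'.symm
  have huu' : u = u' := Prod.ext (hN hu hu' hv hv' hsum) hsnd
  subst huu'
  obtain rfl : v = v' := add_left_cancel hsum
  rfl

theorem FstUniqueDecomposition.sumFiber_finite (hN : FstUniqueDecomposition N₁ N₂)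
    (h₁ : ∀ u ∈ N₁, 0 ≤ u.2) (h₂ : ∀ v ∈ N₂, 0 ≤ v.2) (g : H × ℤ) :
    (sumFiber N₁ N₂ g).Finite := by
  refine Set.Finite.of_finite_image ((Set.finite_Icc 0 g.2).subset ?_) (hN.injOn_sumFiber g)
  rintro _ ⟨w, hw, rfl⟩
  have hsnd : (w.1 : H × ℤ).2 + (w.2 : H × ℤ).2 = g.2 := congrArg Prod.snd hw
  exact ⟨h₁ _ w.1.2, by linarith [h₂ _ w.2.2]⟩

/-- If two solutions for `g` have `u`-heights `s < s'`, the first one is `(u, v' + (s' - s) e)`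
with `v'` from the second, so its `v` still contains `e`. -/
theorem FstUniqueDecomposition.sub_mem_of_snd_lt (hN : FstUniqueDecomposition N₁ N₂)
    (he : ((0 : H), (1 : ℤ)) ∈ N₂) {g : H × ℤ} {w w' : N₁ × N₂}
    (hw : w ∈ sumFiber N₁ N₂ g) (hw' : w' ∈ sumFiber N₁ N₂ g)
    (hlt : (w.1 : H × ℤ).2 < (w'.1 : H × ℤ).2) :
    (w.2 : H × ℤ) - (0, 1) ∈ N₂ := by
  obtain ⟨⟨u, hu⟩, ⟨v, hv⟩⟩ := w
  obtain ⟨⟨u', hu'⟩, ⟨v', hv'⟩⟩ := w'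
  have hsum : u + v = u' + v' := hw.trans hw'.symm
  have hfst : u.1 = u'.1 := hN hu hu' hv hv' hsum
  obtain ⟨n, hn⟩ : ∃ n : ℕ, u'.2 = u.2 + n + 1 := ⟨(u'.2 - u.2 - 1).toNat, by simp at hlt; omega⟩
  have hv_eq : v - (0, 1) = v' + n • (0, 1) := by
    have h1 : u.1 + v.1 = u'.1 + v'.1 := congrArg Prod.fst hsum
    have h2 : u.2 + v.2 = u'.2 + v'.2 := congrArg Prod.snd hsum
    ext
    · simp only [Prod.fst_sub, Prod.fst_add, Prod.smul_fst, smul_zero, sub_zero, add_zero]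
      rw [hfst] at h1
      exact add_left_cancel h1
    · simp only [Prod.snd_sub, Prod.snd_add, Prod.smul_snd, nsmul_eq_mul, mul_one]
      omega
  rw [hv_eq]
  exact add_mem hv' (AddSubmonoid.nsmul_mem _ he n)

theorem FstUniqueDecomposition.subsingleton_sub_not_mem (hN : FstUniqueDecomposition N₁ N₂)
    (he : ((0 : H), (1 : ℤ)) ∈ N₂) (g : H × ℤ) :
    {w ∈ sumFiber N₁ N₂ g | (w.2 : H × ℤ) - (0, 1) ∉ N₂}.Subsingleton := by
  rintro w ⟨hw, hwB⟩ w' ⟨hw', hw'B⟩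
  by_contra hne
  rcases lt_trichotomy (w.1 : H × ℤ).2 (w'.1 : H × ℤ).2 with hlt | heq | hgt
  · exact hwB (hN.sub_mem_of_snd_lt he hw hw' hlt)
  · exact hne (hN.injOn_sumFiber g hw hw' heq)
  · exact hw'B (hN.sub_mem_of_snd_lt he hw' hw hgt)

/-- The solution of largest `u`-height cannot pass an `e` from `v` to `u`. -/
theorem exists_mem_sumFiber_sub_not_mem (he : ((0 : H), (1 : ℤ)) ∈ N₁) {g : H × ℤ}
    (hfin : (sumFiber N₁ N₂ g).Finite) (hne : (sumFiber N₁ N₂ g).Nonempty) :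
    ∃ w ∈ sumFiber N₁ N₂ g, (w.2 : H × ℤ) - (0, 1) ∉ N₂ := by
  obtain ⟨w, hw, hmax⟩ := Set.exists_max_image _ (fun w : N₁ × N₂ => (w.1 : H × ℤ).2) hfin hne
  refine ⟨w, hw, fun hsub => ?_⟩
  have hshift : (⟨⟨_, add_mem w.1.2 he⟩, ⟨_, hsub⟩⟩ : N₁ × N₂) ∈ sumFiber N₁ N₂ g := by
    rw [← hw]
    exact add_add_sub_cancel _ _ _
  have := hmax _ hshift
  simp at this

theorem FstUniqueDecomposition.indicator_add_ncard_sumFiber_sub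
    (hN : FstUniqueDecomposition N₁ N₂) (h₁ : ∀ u ∈ N₁, 0 ≤ u.2) (h₂ : ∀ v ∈ N₂, 0 ≤ v.2)
    (he₁ : ((0 : H), (1 : ℤ)) ∈ N₁) (he₂ : ((0 : H), (1 : ℤ)) ∈ N₂) (g : H × ℤ) :
    Set.indicator ((N₁ ⊔ N₂ : AddSubmonoid (H × ℤ)) : Set (H × ℤ)) (fun _ => (1 : ℕ)) g +
        (sumFiber N₁ N₂ (g - (0, 1))).ncard = (sumFiber N₁ N₂ g).ncard := by
  have hfin := hN.sumFiber_finite h₁ h₂ g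
  have hminimal : {w ∈ sumFiber N₁ N₂ g | (w.2 : H × ℤ) - (0, 1) ∉ N₂}.ncard =
      Set.indicator ((N₁ ⊔ N₂ : AddSubmonoid (H × ℤ)) : Set (H × ℤ)) (fun _ => (1 : ℕ)) g := by
    by_cases hg : g ∈ N₁ ⊔ N₂
    · rw [Set.indicator_of_mem hg, Set.ncard_eq_one]
      obtain ⟨w, hw⟩ :=
        exists_mem_sumFiber_sub_not_mem he₁ hfin (mem_sup_iff_sumFiber_nonempty.mp hg)
      exact ⟨w, (hN.subsingleton_sub_not_mem he₂ g).eq_singleton_of_mem hw⟩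
    · rw [Set.indicator_of_notMem hg, Set.ncard_eq_zero (hfin.sep _),
        Set.eq_empty_iff_forall_notMem]
      exact fun w hw => hg (mem_sup_iff_sumFiber_nonempty.mpr ⟨w, hw.1⟩)
  rw [← hminimal, ncard_sumFiber_sub he₂, add_comm]
  exact Set.ncard_inter_add_ncard_sdiff_eq_ncard _ {w | (w.2 : H × ℤ) - (0, 1) ∈ N₂} hfin

end Graded

section MofSet

variable {m : ℕ}

theorem MofSet_union (A B : Set (Fin m → ℤ)) : MofSet (A ∪ B) = MofSet A ⊔ MofSet B := by
  rw [MofSet, Set.image_union, AddSubmonoid.closure_union]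
  rfl

theorem zero_one_mem_MofSet {A : Set (Fin m → ℤ)} (h0 : 0 ∈ A) : ((0 : Fin m → ℤ), 1) ∈ MofSet A :=
  AddSubmonoid.subset_closure ⟨0, h0, rfl⟩

theorem snd_nonneg_of_mem_MofSet {A : Set (Fin m → ℤ)} {u : (Fin m → ℤ) × ℤ}
    (hu : u ∈ MofSet A) : 0 ≤ u.2 := by
  induction hu using AddSubmonoid.closure_induction with
  | mem x hx => obtain ⟨a, -, rfl⟩ := hx; exact zero_le_one
  | zero => exact le_rfl
  | add x y _ _ hx hy => exact add_nonneg hx hy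

variable (m) in
abbrev intCastHom : (Fin m → ℤ) →+ (Fin m → ℝ) := AddMonoidHom.compLeft (Int.castAddHom ℝ) (Fin m)

theorem intCastHom_fst_mem_span {A : Set (Fin m → ℤ)} {u : (Fin m → ℤ) × ℤ}
    (hu : u ∈ MofSet A) : intCastHom m u.1 ∈ Submodule.span ℝ (intCastHom m '' A) := by
  induction hu using AddSubmonoid.closure_induction with
  | mem x hx =>
    obtain ⟨a, ha, rfl⟩ := hx
    exact Submodule.subset_span ⟨a, ha, rfl⟩
  | zero => simp
  | add x y _ _ hx hy => simpa using add_mem hx hy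

theorem fstUniqueDecomposition_MofSet {A B : Set (Fin m → ℤ)}
    (hspan : Submodule.span ℝ (intCastHom m '' A) ⊓ Submodule.span ℝ (intCastHom m '' B) = ⊥) :
    FstUniqueDecomposition (MofSet A) (MofSet B) := by
  intro u u' v v' hu hu' hv hv' h
  have hdiff : intCastHom m u.1 - intCastHom m u'.1 = intCastHom m v'.1 - intCastHom m v.1 := by
    rw [sub_eq_sub_iff_add_eq_add, ← map_add, ← map_add, ← Prod.fst_add, ← Prod.fst_add, h, add_comm]
  have hmem : intCastHom m u.1 - intCastHom m u'.1 ∈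
      Submodule.span ℝ (intCastHom m '' A) ⊓ Submodule.span ℝ (intCastHom m '' B) :=
    ⟨sub_mem (intCastHom_fst_mem_span hu) (intCastHom_fst_mem_span hu'),
      hdiff ▸ sub_mem (intCastHom_fst_mem_span hv') (intCastHom_fst_mem_span hv)⟩
  rw [hspan, Submodule.mem_bot, sub_eq_zero] at hmem
  exact funext fun i => Int.cast_injective (congrFun hmem i)

end MofSet

theorem free_sum_pointconfig_hilbert_general {m : ℕ}
    (A B : Set (Fin m → ℤ))
    (h0A : (0 : Fin m → ℤ) ∈ A) (h0B : (0 : Fin m → ℤ) ∈ B)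
    (hspan : Submodule.span ℝ ((fun (z : Fin m → ℤ) (i : Fin m) => (z i : ℝ)) '' A) ⊓
      Submodule.span ℝ ((fun (z : Fin m → ℤ) (i : Fin m) => (z i : ℝ)) '' B) = ⊥) :
    ∀ g : (Fin m → ℤ) × ℤ,
      {w : MofSet A × MofSet B |
        ((w.1 : (Fin m → ℤ) × ℤ) + (w.2 : (Fin m → ℤ) × ℤ)) = g}.Finite ∧
      Set.indicator (MofSet (A ∪ B) : Set ((Fin m → ℤ) × ℤ)) (fun _ => (1 : ℕ)) g +
          {w : MofSet A × MofSet B |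
            ((w.1 : (Fin m → ℤ) × ℤ) + (w.2 : (Fin m → ℤ) × ℤ)) =
              g - ((0 : Fin m → ℤ), (1 : ℤ))}.ncard =
        {w : MofSet A × MofSet B |
          ((w.1 : (Fin m → ℤ) × ℤ) + (w.2 : (Fin m → ℤ) × ℤ)) = g}.ncard := by
  intro g
  have hN := fstUniqueDecomposition_MofSet hspan
  have hA : ∀ u ∈ MofSet A, 0 ≤ u.2 := fun _ => snd_nonneg_of_mem_MofSet
  have hB : ∀ v ∈ MofSet B, 0 ≤ v.2 := fun _ => snd_nonneg_of_mem_MofSet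
  rw [MofSet_union]
  exact ⟨hN.sumFiber_finite hA hB g, hN.indicator_add_ncard_sumFiber_sub hA hB
    (zero_one_mem_MofSet h0A) (zero_one_mem_MofSet h0B) g⟩

/-- **Corollary 2.6(2).** Let `A, B ⊆ ℤ^m` be finite sets such that `A ∪ B` is the free
sum of `A` and `B`.  Then `ℍ_{M(A ∪ B)} = (1 − T_{m+1}) ℍ_{M(A)} ℍ_{M(B)}`; equivalently,
coefficientwise: for every `g ∈ ℤ^{m+1}`, the set of pairs `(u, v) ∈ M(A) × M(B)` with
`u + v = g` is finite and
`[g ∈ M(A ∪ B)] = #{(u,v) : u + v = g} − #{(u,v) : u + v = g − (0,1)}`. -/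
theorem free_sum_pointconfig_hilbert {m : ℕ}
    (A B : Set (Fin m → ℤ)) (hAfin : A.Finite) (hBfin : B.Finite)
    (h0A : (0 : Fin m → ℤ) ∈ A) (h0B : (0 : Fin m → ℤ) ∈ B)
    (hspan : Submodule.span ℝ ((fun (z : Fin m → ℤ) (i : Fin m) => (z i : ℝ)) '' A) ⊓
      Submodule.span ℝ ((fun (z : Fin m → ℤ) (i : Fin m) => (z i : ℝ)) '' B) = ⊥) :
    ∀ g : (Fin m → ℤ) × ℤ,
      {w : MofSet A × MofSet B |
        ((w.1 : (Fin m → ℤ) × ℤ) + (w.2 : (Fin m → ℤ) × ℤ)) = g}.Finite ∧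
      Set.indicator (MofSet (A ∪ B) : Set ((Fin m → ℤ) × ℤ)) (fun _ => (1 : ℕ)) g +
          {w : MofSet A × MofSet B |
            ((w.1 : (Fin m → ℤ) × ℤ) + (w.2 : (Fin m → ℤ) × ℤ)) =
              g - ((0 : Fin m → ℤ), (1 : ℤ))}.ncard =
        {w : MofSet A × MofSet B |
          ((w.1 : (Fin m → ℤ) × ℤ) + (w.2 : (Fin m → ℤ) × ℤ)) = g}.ncard :=
  free_sum_pointconfig_hilbert_general A B h0A h0B hspan
end

section
/- Let K be a field, M ⊆ ℤ^m an affine monoid, and let x, y ∈ M be noninvertible with x ≠ y such that X^x, X^y is a K[M]-sequence. Then for every z ∈ M the monomial X^z is a non-zerodivisor on the quotient ring K[M]/(X^x − X^y). -/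
open AddMonoidAlgebra

/-!
Write `f = X^x - X^y` and `d = x - y`. Since `X^y` is regular modulo `X^x`, a point `a` with
`a + x, a + y ∈ M` lies in `M`. Suppose `X^z u = f v` and let `p` be in the support of `v`. Along
the line `p + ℤ d` the support of `v` is finite, with ends `p + i d` and `p + j d`; there `f v`
has the nonzero coefficients at `p + i d + y` and `p + j d + x`, so both points lie in `z + M`.
Inducting on the length of the segment with the saturation property above puts every
`p + k d`, `i ≤ k ≤ j`, in `z + M`, in particular `p`. Hence `v = X^z t`, and cancelling the
monomial `X^z` gives `u = f t`.
-/

section Line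

variable {G : Type*} [AddCommGroup G] {N : Set G} {x y : G}

theorem add_zsmul_sub_mem_of_endpoints (hNx : ∀ a ∈ N, a + x ∈ N)
    (hNy : ∀ a ∈ N, a + y ∈ N) (hN : ∀ a, a + x ∈ N → a + y ∈ N → a ∈ N) {i j : ℤ}
    (hij : i ≤ j) {p : G} (hi : p + i • (x - y) + y ∈ N) (hj : p + j • (x - y) + x ∈ N)
    {k : ℤ} (hik : i ≤ k) (hkj : k ≤ j) : p + k • (x - y) ∈ N := by
  induction j, hij using Int.leInduction generalizing p k with
  | base => exact hN _ (by rwa [le_antisymm hkj hik]) (by rwa [le_antisymm hkj hik])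
  | succ j hij ih =>
    -- shifting `p` by `x` turns the segment `[i, j + 1]` into `[i, j]`
    have ih' : ∀ k, i ≤ k → k ≤ j → p + k • (x - y) + x ∈ N := fun k hik hkj ↦ by
      simpa only [add_right_comm p x] using
        ih (p := p + x) (by simpa only [add_right_comm _ x] using hNx _ hi)
          (by convert hNy _ hj using 1; module) hik hkj
    refine hN _ ?_ ?_
    · obtain hkj | rfl := Int.le_add_one_iff.mp hkj
      · exact ih' k hik hkj
      · exact hj
    · obtain rfl | hik := hik.eq_or_lt
      · exact hi
      · convert ih' (k - 1) (by omega) (by omega) using 1; module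

end Line

section Binomial

variable {K G : Type*} [Ring K] [AddCommGroup G]

theorem coeff_single_sub_single_mul (x y s : G) (w : K[G]) :
    ((single x 1 - single y 1) * w).coeff s = w.coeff (s - x) - w.coeff (s - y) := by
  simp [sub_mul, neg_add_eq_sub]

theorem support_subset_of_support_single_sub_single_mul_subset [IsAddTorsionFree G] {N : Set G}
    {x y : G} (hNx : ∀ a ∈ N, a + x ∈ N) (hNy : ∀ a ∈ N, a + y ∈ N)
    (hN : ∀ a, a + x ∈ N → a + y ∈ N → a ∈ N) (hxy : x ≠ y) {w : K[G]}
    (hw : ↑((single x 1 - single y 1) * w).coeff.support ⊆ N) : ↑w.coeff.support ⊆ N := by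
  intro p hp
  set S : Set ℤ := {k | w.coeff (p + k • (x - y)) ≠ 0}
  have hS : S.Finite := (w.coeff.support.finite_toSet.preimage <|
    ((add_right_injective p).comp (smul_left_injective ℤ (sub_ne_zero.2 hxy))).injOn).subset
      fun _ hk ↦ by simpa [S] using hk
  have h0S : (0 : ℤ) ∈ S := by simpa [S] using hp
  obtain ⟨i, hi0, hiS, hi⟩ := hS.exists_le_minimal h0S
  obtain ⟨j, hj0, hjS, hj⟩ := hS.exists_le_maximal h0S
  have hpred : w.coeff (p + (i - 1) • (x - y)) = 0 := by
    by_contra h; have := hi h (by omega); omega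
  have hsucc : w.coeff (p + (j + 1) • (x - y)) = 0 := by
    by_contra h; have := hj h (by omega); omega
  have hiN : p + i • (x - y) + y ∈ N := hw <| by
    rw [Finset.mem_coe, Finsupp.mem_support_iff, coeff_single_sub_single_mul,
      add_sub_cancel_right, show p + i • (x - y) + y - x = p + (i - 1) • (x - y) by module, hpred,
      zero_sub, neg_ne_zero]
    exact hiS
  have hjN : p + j • (x - y) + x ∈ N := hw <| by
    rw [Finset.mem_coe, Finsupp.mem_support_iff, coeff_single_sub_single_mul,
      add_sub_cancel_right, show p + j • (x - y) + x - y = p + (j + 1) • (x - y) by module, hsucc,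
      sub_zero]
    exact hjS
  simpa using add_zsmul_sub_mem_of_endpoints hNx hNy hN (hi0.trans hj0) hiN hjN hi0 hj0

end Binomial

theorem IsRegSeq.mem_span_singleton_of_mul_mem {R : Type*} [CommRing R] {f g r : R}
    (hreg : IsRegSeq [f, g]) (hr : g * r ∈ Ideal.span {f}) : r ∈ Ideal.span {f} := by
  simpa using hreg.2 ⟨1, by simp⟩ r (by simpa using hr)

theorem isLeftRegular_single_one {R A : Type*} [Semiring R] [AddMonoid A] [IsCancelAdd A] (a : A) :
    IsLeftRegular (single a 1 : R[A]) := fun v w h ↦ by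
  ext p
  simpa using congr(($h).coeff (a + p))

section Submonoid

variable {K G : Type*} [AddCommGroup G] {M : AddSubmonoid G}

theorem mem_span_single_iff_sub_mem [Semiring K] (z : M) (w : K[M]) :
    w ∈ Ideal.span {single z 1} ↔ ∀ p ∈ w.coeff.support, (p : G) - z ∈ M := by
  rw [← of'_apply, ← Set.image_singleton, mem_ideal_span_of'_image]
  refine forall₂_congr fun p _ ↦
    ⟨?_, fun h ↦ ⟨z, rfl, ⟨_, h⟩, Subtype.ext (sub_add_cancel _ _).symm⟩⟩
  rintro ⟨_, rfl, d, rfl⟩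
  simp

theorem coe_support_mapDomainRingHom_subtype [Semiring K] (w : K[M]) :
    ↑(mapDomainRingHom K M.subtype w).coeff.support = ((↑) : M → G) '' w.coeff.support := by
  classical
  simp [Finsupp.mapDomain_support_of_injective Subtype.val_injective]

theorem mem_span_single_of_single_sub_single_mul_mem [Ring K] [IsAddTorsionFree G] {x y : M}
    (hxy : x ≠ y) (hM : ∀ a : G, a + x ∈ M → a + y ∈ M → a ∈ M) (z : M) {v : K[M]}
    (hv : (single x 1 - single y 1) * v ∈ Ideal.span {single z 1}) :
    v ∈ Ideal.span {single z 1} := by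
  set N : Set G := {g | g - z ∈ M}
  have hN : ∀ w : K[M], ↑(mapDomainRingHom K M.subtype w).coeff.support ⊆ N ↔
      w ∈ Ideal.span {single z 1} := fun w ↦ by
    rw [coe_support_mapDomainRingHom_subtype, Set.image_subset_iff, mem_span_single_iff_sub_mem]
    rfl
  rw [← hN] at hv ⊢
  refine support_subset_of_support_single_sub_single_mul_subset (N := N) (x := (x : G))
    (y := (y : G)) (fun a ha ↦ ?_) (fun a ha ↦ ?_) (fun a hax hay ↦ hM _ ?_ ?_)
    (Subtype.coe_injective.ne hxy) <| by
      simpa only [map_mul, map_sub, mapDomainRingHom_apply, mapDomain_single,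
        AddSubmonoid.coe_subtype] using hv
  · simpa [N, sub_add_eq_add_sub] using M.add_mem ha x.2
  · simpa [N, sub_add_eq_add_sub] using M.add_mem ha y.2
  · simpa [N, sub_add_eq_add_sub] using hax
  · simpa [N, sub_add_eq_add_sub] using hay

theorem IsRegSeq.mem_of_add_mem_of_add_mem [CommRing K] [Nontrivial K] {x y : M}
    (hreg : IsRegSeq [(single x 1 : K[M]), single y 1]) {a : G} (hax : a + x ∈ M)
    (hay : a + y ∈ M) : a ∈ M := by
  have hmul : single y 1 * single ⟨a + x, hax⟩ 1 ∈ Ideal.span {(single x 1 : K[M])} := by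
    refine Ideal.mem_span_singleton'.2 ⟨single ⟨a + y, hay⟩ 1, ?_⟩
    rw [single_mul_single, single_mul_single, one_mul]
    congr 1
    ext
    simp only [AddSubmonoid.coe_add]
    abel
  simpa using (mem_span_single_iff_sub_mem x _).1 (hreg.mem_span_singleton_of_mul_mem hmul)

end Submonoid

theorem monomial_nonzerodivisor_mod_binomial_general {m : ℕ} (K : Type*) [Field K]
    (M : AddSubmonoid (Fin m → ℤ))
    (x y : M) (hxy : x ≠ y)
    (hreg : IsRegSeq [(single x 1 : AddMonoidAlgebra K M), single y 1]) :
    ∀ z : M, ∀ r : AddMonoidAlgebra K M ⧸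
        Ideal.span {(single x 1 : AddMonoidAlgebra K M) - single y 1},
      Ideal.Quotient.mk (Ideal.span {(single x 1 : AddMonoidAlgebra K M) - single y 1})
          (single z 1) * r = 0 → r = 0 := by
  intro z r hzr
  obtain ⟨u, rfl⟩ := Ideal.Quotient.mk_surjective r
  rw [← map_mul, Ideal.Quotient.eq_zero_iff_mem, Ideal.mem_span_singleton'] at hzr
  obtain ⟨v, hv⟩ := hzr
  obtain ⟨t, rfl⟩ := Ideal.mem_span_singleton'.1 <|
    mem_span_single_of_single_sub_single_mul_mem hxy (fun _ ↦ hreg.mem_of_add_mem_of_add_mem) z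
      (Ideal.mem_span_singleton'.2 ⟨u, by rw [mul_comm, ← hv, mul_comm]⟩)
  rw [Ideal.Quotient.eq_zero_iff_mem, Ideal.mem_span_singleton']
  exact ⟨t, isLeftRegular_single_one z <| by linear_combination hv⟩

/-- **(From the proof of Theorem 2.1.)** Let `K` be a field, `M ⊆ ℤ^m` an affine monoid,
and `x ≠ y` noninvertible elements of `M` such that `X^x, X^y` is a `K[M]`-sequence.
Then no monomial `X^z`, `z ∈ M`, is a zerodivisor on `K[M]/(X^x − X^y)`. -/
theorem monomial_nonzerodivisor_mod_binomial {m : ℕ} (K : Type*) [Field K]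
    (M : AddSubmonoid (Fin m → ℤ)) (hMfg : M.FG)
    (x y : M) (hx : -(x : Fin m → ℤ) ∉ M) (hy : -(y : Fin m → ℤ) ∉ M) (hxy : x ≠ y)
    (hreg : IsRegSeq [(single x 1 : AddMonoidAlgebra K M), single y 1]) :
    ∀ z : M, ∀ r : AddMonoidAlgebra K M ⧸
        Ideal.span {(single x 1 : AddMonoidAlgebra K M) - single y 1},
      Ideal.Quotient.mk (Ideal.span {(single x 1 : AddMonoidAlgebra K M) - single y 1})
          (single z 1) * r = 0 → r = 0 :=
  monomial_nonzerodivisor_mod_binomial_general K M x y hxy hreg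
end
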